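/- arXiv:2502.13813 — 4 statements merged into one kernel-verified Lean document; each statement's English description precedes it below -/
import Mathlib

section
/- Let ((Y_i,Ỹ_i))_{i≥1} be i.i.d. with common law P_{YỸ}, let t ≥ 1 be an integer, and let a > 0 and L > 1 be reals. Then P[ ∏_{i=1}^t λ(Y_i,Ỹ_i) ≤ L^a ] ≤ exp(−t·E), where E := sup_{ν ≤ 1} [ (ν−1)·a·(log L)/t − (ν−1)·D_ν(P_{YỸ} ‖ P_Y⊗P_Y) ]. -/
open Filter Real

section

variable {𝒴 : Type*} [Fintype 𝒴] [Nonempty 𝒴]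

/-- `p` is a probability mass function on a finite alphabet. -/
def IsPmf {α : Type*} [Fintype α] (p : α → ℝ) : Prop := (∀ a, 0 ≤ p a) ∧ ∑ a, p a = 1

/-- The first marginal of a pmf on `𝒴 × 𝒴`. -/
noncomputable def margFst (p : 𝒴 × 𝒴 → ℝ) (y : 𝒴) : ℝ := ∑ z, p (y, z)

/-- The two marginals of `p` agree. -/
def MargEq (p : 𝒴 × 𝒴 → ℝ) : Prop := ∀ y, ∑ z, p (y, z) = ∑ z, p (z, y)

/-- The likelihood ratio `λ(y, ỹ)`. -/
noncomputable def lam2 (p : 𝒴 × 𝒴 → ℝ) (y z : 𝒴) : ℝ :=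
  if 0 < margFst p y * margFst p z then p (y, z) / (margFst p y * margFst p z) else 0

/-- The mutual information `I(Y; Ỹ)`. -/
noncomputable def mutInf2 (p : 𝒴 × 𝒴 → ℝ) : ℝ :=
  ∑ z : 𝒴 × 𝒴, if 0 < p z then p z * Real.log (lam2 p z.1 z.2) else 0

/-- The order-`ν` Rényi divergence `D_ν(P_{Y Ỹ} ‖ P_Y ⊗ P_Y)`, with `D₁ := I(Y; Ỹ)`. -/
noncomputable def renyiDiv (p : 𝒴 × 𝒴 → ℝ) (ν : ℝ) : ℝ :=
  if ν = 1 then mutInf2 p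
  else (ν - 1)⁻¹ * Real.log (∑ z : 𝒴 × 𝒴,
    if 0 < p z then p z ^ ν * (margFst p z.1 * margFst p z.2) ^ (1 - ν) else 0)

lemma marg_pos {p : 𝒴 × 𝒴 → ℝ} (hp : IsPmf p) (hm : MargEq p) {w : 𝒴 × 𝒴} (hw : 0 < p w) :
    0 < margFst p w.1 * margFst p w.2 := by
  have h1 : 0 < margFst p w.1 :=
    Finset.sum_pos' (fun z _ => hp.1 _) ⟨w.2, Finset.mem_univ _, by simpa using hw⟩
  have h2 : 0 < margFst p w.2 := by
    rw [margFst, hm w.2]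
    exact Finset.sum_pos' (fun z _ => hp.1 _) ⟨w.1, Finset.mem_univ _, by simpa using hw⟩
  exact mul_pos h1 h2

/-- Chernoff-type bound for the probability that the product of likelihood
ratios of `t` i.i.d. pairs is at most `L^a`. -/
theorem chernoff_undershoot_bound
    (p : 𝒴 × 𝒴 → ℝ) (hp : IsPmf p) (hm : MargEq p)
    (t : ℕ) (ht : 1 ≤ t) (a Lr : ℝ) (ha : 0 < a) (hLr : 1 < Lr) :
    (∑ z : Fin t → 𝒴 × 𝒴, (∏ i, p (z i)) *
        (if (∏ i, lam2 p (z i).1 (z i).2) ≤ Lr ^ a then 1 else 0)) ≤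
      Real.exp (-(t : ℝ) * sSup {e : ℝ | ∃ ν ≤ (1 : ℝ),
        e = (ν - 1) * a * Real.log Lr / (t : ℝ) - (ν - 1) * renyiDiv p ν}) := by
  have htpos : (0:ℝ) < (t:ℝ) := by exact_mod_cast Nat.lt_of_lt_of_le Nat.zero_lt_one ht
  have hLpos : (0:ℝ) < Lr := lt_trans one_pos hLr
  have hLa : (0:ℝ) < Lr ^ a := Real.rpow_pos_of_pos hLpos a
  set X := (∑ z : Fin t → 𝒴 × 𝒴, (∏ i, p (z i)) *
        (if (∏ i, lam2 p (z i).1 (z i).2) ≤ Lr ^ a then 1 else 0)) with hXdef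
  set S := {e : ℝ | ∃ ν ≤ (1 : ℝ),
        e = (ν - 1) * a * Real.log Lr / (t : ℝ) - (ν - 1) * renyiDiv p ν} with hSdef
  have hX0 : 0 ≤ X := by
    apply Finset.sum_nonneg
    intro z _
    apply mul_nonneg (Finset.prod_nonneg fun i _ => hp.1 _)
    split_ifs <;> norm_num
  -- X ≤ 1
  have hsum1 : ∑ z : Fin t → 𝒴 × 𝒴, ∏ i, p (z i) = 1 := by
    have h := Finset.prod_univ_sum (fun _ : Fin t => (Finset.univ : Finset (𝒴 × 𝒴)))
      (fun _ w => p w)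
    rw [Fintype.piFinset_univ] at h
    rw [← h, Finset.prod_const, hp.2, one_pow]
  have hX1 : X ≤ 1 := by
    rw [← hsum1]
    apply Finset.sum_le_sum
    intro z _
    have := Finset.prod_nonneg (fun i (_ : i ∈ Finset.univ) => hp.1 (z i))
    split_ifs <;> nlinarith
  -- positivity of p somewhere
  obtain ⟨w0, hw0⟩ : ∃ w, 0 < p w := by
    by_contra hc
    push_neg at hc
    have : ∑ w, p w = 0 := Finset.sum_eq_zero fun w _ => le_antisymm (hc w) (hp.1 w)
    rw [hp.2] at this; norm_num at this
  -- main pointwise Chernoff bound for ν < 1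
  have hmain : ∀ e ∈ S, X ≤ Real.exp (-(t:ℝ) * e) := by
    rintro e ⟨ν, hν, rfl⟩
    rcases eq_or_lt_of_le hν with h1 | h1
    · rw [h1]
      simp only [sub_self, zero_mul, zero_div, sub_zero, mul_zero, neg_zero, Real.exp_zero]
      simpa using hX1
    · -- ν < 1
      set M := fun w : 𝒴 × 𝒴 => margFst p w.1 * margFst p w.2 with hMdef
      set g := fun w : 𝒴 × 𝒴 => if 0 < p w then p w ^ ν * M w ^ (1 - ν) else 0 with hgdef
      have hg_nonneg : ∀ w, 0 ≤ g w := by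
        intro w
        simp only [hgdef]
        split_ifs with h
        · have := marg_pos hp hm h
          positivity
        · exact le_rfl
      set Z := ∑ w, g w with hZdef
      have hZren : renyiDiv p ν = (ν - 1)⁻¹ * Real.log Z := by
        rw [renyiDiv, if_neg (ne_of_lt h1)]
      have hZpos : 0 < Z := by
        apply Finset.sum_pos' (fun w _ => hg_nonneg w)
        refine ⟨w0, Finset.mem_univ _, ?_⟩
        simp only [hgdef, if_pos hw0]
        have := marg_pos hp hm hw0
        positivity
      have key : ∀ z : Fin t → 𝒴 × 𝒴,
          (∏ i, p (z i)) * (if (∏ i, lam2 p (z i).1 (z i).2) ≤ Lr ^ a then 1 else 0)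
            ≤ (Lr ^ a) ^ (1 - ν) * ∏ i, g (z i) := by
        intro z
        by_cases hall : ∀ i, 0 < p (z i)
        · have hMi : ∀ i, 0 < M (z i) := fun i => marg_pos hp hm (hall i)
          have hlam : ∀ i, lam2 p (z i).1 (z i).2 = p (z i) / M (z i) := by
            intro i
            rw [lam2, if_pos (hMi i)]
          have hlampos : ∀ i, 0 < lam2 p (z i).1 (z i).2 := fun i => by
            rw [hlam i]; exact div_pos (hall i) (hMi i)
          have hgi : ∀ i, g (z i) = p (z i) * (lam2 p (z i).1 (z i).2) ^ (ν - 1) := by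
            intro i
            rw [hlam i]
            simp only [hgdef, if_pos (hall i)]
            have e1 : p (z i) * p (z i) ^ (ν - 1) = p (z i) ^ ν := by
              rw [Real.rpow_sub (hall i), Real.rpow_one]
              field_simp
              exact mul_div_cancel_left₀ _ (hall i).ne'
            have e2 : (M (z i)) ^ ((1:ℝ) - ν) = ((M (z i)) ^ (ν - 1))⁻¹ := by
              rw [show (1:ℝ) - ν = -(ν - 1) by ring, Real.rpow_neg (hMi i).le]
            rw [Real.div_rpow (hall i).le (hMi i).le, e2, ← e1]
            ring
          have hprodg : ∏ i, g (z i)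
              = (∏ i, p (z i)) * (∏ i, lam2 p (z i).1 (z i).2) ^ (ν - 1) := by
            rw [← Real.finset_prod_rpow _ _ (fun i _ => (hlampos i).le),
              ← Finset.prod_mul_distrib]
            exact Finset.prod_congr rfl fun i _ => hgi i
          by_cases hind : (∏ i, lam2 p (z i).1 (z i).2) ≤ Lr ^ a
          · rw [if_pos hind, mul_one, hprodg]
            have hP : 0 < ∏ i, lam2 p (z i).1 (z i).2 :=
              Finset.prod_pos fun i _ => hlampos i
            have h1le : (1:ℝ) ≤ (Lr ^ a / ∏ i, lam2 p (z i).1 (z i).2) ^ (1 - ν) :=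
              Real.one_le_rpow ((one_le_div hP).mpr hind) (by linarith)
            calc (∏ i, p (z i)) = (∏ i, p (z i)) * 1 := (mul_one _).symm
              _ ≤ (∏ i, p (z i)) * (Lr ^ a / ∏ i, lam2 p (z i).1 (z i).2) ^ (1 - ν) :=
                  mul_le_mul_of_nonneg_left h1le
                    (Finset.prod_nonneg fun i _ => (hall i).le)
              _ = (Lr ^ a) ^ (1 - ν) *
                    ((∏ i, p (z i)) * (∏ i, lam2 p (z i).1 (z i).2) ^ (ν - 1)) := by
                  rw [Real.div_rpow hLa.le hP.le, show (ν:ℝ) - 1 = -(1 - ν) by ring,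
                    Real.rpow_neg hP.le]
                  ring
          · rw [if_neg hind, mul_zero]
            exact mul_nonneg (Real.rpow_nonneg hLa.le _)
              (Finset.prod_nonneg fun i _ => hg_nonneg _)
        · push_neg at hall
          obtain ⟨i, hi⟩ := hall
          have hpz : p (z i) = 0 := le_antisymm hi (hp.1 _)
          rw [Finset.prod_eq_zero (Finset.mem_univ i) hpz, zero_mul]
          exact mul_nonneg (Real.rpow_nonneg hLa.le _)
            (Finset.prod_nonneg fun i _ => hg_nonneg _)
      have hsumbd : X ≤ (Lr ^ a) ^ (1 - ν) * Z ^ t := by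
        calc X ≤ ∑ z : Fin t → 𝒴 × 𝒴, (Lr ^ a) ^ (1 - ν) * ∏ i, g (z i) :=
              Finset.sum_le_sum fun z _ => key z
          _ = (Lr ^ a) ^ (1 - ν) * ∑ z : Fin t → 𝒴 × 𝒴, ∏ i, g (z i) := by
              rw [← Finset.mul_sum]
          _ = (Lr ^ a) ^ (1 - ν) * Z ^ t := by
              congr 1
              have h := Finset.prod_univ_sum (fun _ : Fin t => (Finset.univ : Finset (𝒴 × 𝒴)))
                (fun _ w => g w)
              rw [Fintype.piFinset_univ] at h
              rw [← h, Finset.prod_const, Finset.card_univ, Fintype.card_fin]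
      have hnu1 : (ν:ℝ) - 1 ≠ 0 := by intro h; apply ne_of_lt h1; linarith
      have hexp : Real.exp (-(t:ℝ) * ((ν - 1) * a * Real.log Lr / (t : ℝ)
            - (ν - 1) * renyiDiv p ν)) = (Lr ^ a) ^ (1 - ν) * Z ^ t := by
        have harg : -(t:ℝ) * ((ν - 1) * a * Real.log Lr / (t : ℝ)
            - (ν - 1) * renyiDiv p ν)
            = (1 - ν) * (a * Real.log Lr) + (t:ℝ) * Real.log Z := by
          rw [hZren]
          field_simp
          ring
        rw [harg, Real.exp_add, Real.exp_nat_mul, Real.exp_log hZpos]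
        congr 1
        rw [Real.rpow_def_of_pos hLa, Real.log_rpow hLpos]
        ring_nf
      rw [hexp]
      exact hsumbd
  rcases eq_or_lt_of_le hX0 with h | h
  · rw [← h]; positivity
  · have h0S : (0:ℝ) ∈ S := ⟨1, le_refl 1, by ring⟩
    have hub : ∀ e ∈ S, e ≤ -Real.log X / t := by
      intro e he
      have hlog : Real.log X ≤ -(t:ℝ) * e := by
        have h2 := Real.log_le_log h (hmain e he)
        simpa [Real.log_exp] using h2
      rw [le_div_iff₀ htpos]
      linarith
    have hsup : sSup S ≤ -Real.log X / t := csSup_le ⟨0, h0S⟩ hub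
    calc X = Real.exp (Real.log X) := (Real.exp_log h).symm
      _ ≤ Real.exp (-(t:ℝ) * sSup S) := by
          apply Real.exp_le_exp.mpr
          have h4 := (le_div_iff₀ htpos).mp hsup
          nlinarith

end
end

section
/- Assume I(Y;Ỹ) > 0. Then there exists a constant E₀ > 0 such that for every integer t ≥ 1 and ((Y_i,Ỹ_i))_{i=1}^t i.i.d. with common law P_{YỸ}: P[ ∏_{i=1}^t λ(Y_i,Ỹ_i) ≤ 1 ] ≤ exp(−t·E₀). -/
open Filter Real

section

variable {𝒴 : Type*} [Fintype 𝒴] [Nonempty 𝒴]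

/-!
On the event `∏ λ(Yᵢ, Ỹᵢ) ≤ 1` we have `∏ P_{YỸ}(Yᵢ, Ỹᵢ) ≤ ∏ √(P_{YỸ} · P_Y ⊗ P_Y)(Yᵢ, Ỹᵢ)`,
because `P_{YỸ} = √(P_{YỸ} · P_Y ⊗ P_Y) · √λ` pointwise. Summing over all `t`-tuples bounds the
probability by `ρ ^ t`, where `ρ` is the Bhattacharyya coefficient of `P_{YỸ}` and `P_Y ⊗ P_Y`.
By the Hellinger identity `ρ = 1 - ½ ∑ (√P_{YỸ} - √(P_Y ⊗ P_Y))²`, so `ρ < 1` unless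
`P_{YỸ} = P_Y ⊗ P_Y`, which would force `I(Y; Ỹ) = 0`.
-/

lemma exists_pow_le_exp_neg_mul {ρ : ℝ} (hρ0 : 0 ≤ ρ) (hρ1 : ρ < 1) :
    ∃ E₀ > (0 : ℝ), ∀ t : ℕ, ρ ^ t ≤ Real.exp (-(t : ℝ) * E₀) := by
  -- `max ρ ½` instead of `ρ` keeps the logarithm finite when `ρ = 0`.
  set r := max ρ (1 / 2)
  have hr0 : 0 < r := lt_max_of_lt_right one_half_pos
  refine ⟨-Real.log r, neg_pos.mpr (Real.log_neg hr0 (max_lt hρ1 one_half_lt_one)),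
    fun t => ?_⟩
  rw [mul_neg, neg_mul, neg_neg, Real.exp_nat_mul, Real.exp_log hr0]
  exact pow_le_pow_left₀ hρ0 (le_max_left _ _) t

noncomputable def bhattacharyya {α : Type*} [Fintype α] (p q : α → ℝ) : ℝ :=
  ∑ a, Real.sqrt (p a * q a)

section Bhattacharyya

variable {α : Type*} [Fintype α] {p q : α → ℝ}

lemma bhattacharyya_nonneg : 0 ≤ bhattacharyya p q :=
  Finset.sum_nonneg fun _ _ => Real.sqrt_nonneg _

lemma bhattacharyya_eq_one_sub_hellinger (hp : IsPmf p) (hq : IsPmf q) :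
    bhattacharyya p q = 1 - (∑ a, (Real.sqrt (p a) - Real.sqrt (q a)) ^ 2) / 2 := by
  have hterm : ∀ a, Real.sqrt (p a * q a) =
      (p a + q a - (Real.sqrt (p a) - Real.sqrt (q a)) ^ 2) / 2 := fun a => by
    rw [Real.sqrt_mul (hp.1 a)]
    nlinarith [Real.sq_sqrt (hp.1 a), Real.sq_sqrt (hq.1 a)]
  simp only [bhattacharyya, hterm, ← Finset.sum_div, Finset.sum_sub_distrib,
    Finset.sum_add_distrib, hp.2, hq.2]
  ring

lemma bhattacharyya_lt_one (hp : IsPmf p) (hq : IsPmf q) (hpq : p ≠ q) :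
    bhattacharyya p q < 1 := by
  obtain ⟨a, ha⟩ := Function.ne_iff.mp hpq
  have hsqrt : Real.sqrt (p a) ≠ Real.sqrt (q a) := fun h =>
    ha ((Real.sqrt_inj (hp.1 a) (hq.1 a)).mp h)
  have hhellinger : 0 < ∑ a, (Real.sqrt (p a) - Real.sqrt (q a)) ^ 2 :=
    Finset.sum_pos' (fun _ _ => sq_nonneg _)
      ⟨a, Finset.mem_univ a, sq_pos_of_ne_zero (sub_ne_zero.mpr hsqrt)⟩
  rw [bhattacharyya_eq_one_sub_hellinger hp hq]
  linarith

end Bhattacharyya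

section MarginalProduct

variable {α : Type*} [Fintype α] {p : α × α → ℝ}

noncomputable def margProd (p : α × α → ℝ) (w : α × α) : ℝ :=
  margFst p w.1 * margFst p w.2

lemma isPmf_margProd (hp : IsPmf p) : IsPmf (margProd p) := by
  have hmarg : ∑ y, margFst p y = 1 := by
    rw [← hp.2, Fintype.sum_prod_type]
    rfl
  refine ⟨fun w => mul_nonneg ?_ ?_, ?_⟩
  · exact Finset.sum_nonneg fun _ _ => hp.1 _
  · exact Finset.sum_nonneg fun _ _ => hp.1 _
  · simp only [margProd, Fintype.sum_prod_type, ← Finset.mul_sum, hmarg, mul_one]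

lemma margProd_pos_of_pos (hp : IsPmf p) (hm : MargEq p) {w : α × α} (hw : 0 < p w) :
    0 < margProd p w := by
  refine mul_pos (hw.trans_le ?_) (hw.trans_le ?_)
  · exact Finset.single_le_sum (fun z _ => hp.1 (w.1, z)) (Finset.mem_univ w.2)
  · rw [margFst, hm]
    exact Finset.single_le_sum (fun z _ => hp.1 (z, w.2)) (Finset.mem_univ w.1)

lemma lam2_nonneg (hp : IsPmf p) (y z : α) : 0 ≤ lam2 p y z := by
  unfold lam2
  split_ifs with h
  exacts [div_nonneg (hp.1 _) h.le, le_rfl]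

lemma lam2_eq_div_margProd {w : α × α} (hw : 0 < margProd p w) :
    lam2 p w.1 w.2 = p w / margProd p w :=
  if_pos hw

lemma eq_sqrt_mul_margProd_mul_sqrt_lam2 (hp : IsPmf p) (hm : MargEq p) (w : α × α) :
    p w = Real.sqrt (p w * margProd p w) * Real.sqrt (lam2 p w.1 w.2) := by
  rcases (hp.1 w).eq_or_lt with hw | hw
  · rw [← hw, zero_mul, Real.sqrt_zero, zero_mul]
  have hq := margProd_pos_of_pos hp hm hw
  rw [lam2_eq_div_margProd hq, ← Real.sqrt_mul (mul_nonneg hw.le hq.le),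
    show p w * margProd p w * (p w / margProd p w) = p w * p w by field_simp,
    Real.sqrt_mul_self hw.le]

lemma prod_mul_indicator_prod_lam2_le (hp : IsPmf p) (hm : MargEq p) {t : ℕ}
    (z : Fin t → α × α) :
    (∏ i, p (z i)) * (if (∏ i, lam2 p (z i).1 (z i).2) ≤ 1 then 1 else 0) ≤
      ∏ i, Real.sqrt (p (z i) * margProd p (z i)) := by
  have hH : 0 ≤ ∏ i, Real.sqrt (p (z i) * margProd p (z i)) :=
    Finset.prod_nonneg fun _ _ => Real.sqrt_nonneg _
  split_ifs with hle
  · calc (∏ i, p (z i)) * 1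
        = (∏ i, Real.sqrt (p (z i) * margProd p (z i))) *
            Real.sqrt (∏ i, lam2 p (z i).1 (z i).2) := by
          rw [mul_one, Real.sqrt_prod _ fun i _ => lam2_nonneg hp _ _, ← Finset.prod_mul_distrib]
          exact Finset.prod_congr rfl fun i _ => eq_sqrt_mul_margProd_mul_sqrt_lam2 hp hm (z i)
      _ ≤ ∏ i, Real.sqrt (p (z i) * margProd p (z i)) :=
          mul_le_of_le_one_right hH (Real.sqrt_le_one.mpr hle)
  · rwa [mul_zero]

lemma mutInf2_eq_zero_of_eq_margProd (h : p = margProd p) : mutInf2 p = 0 := by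
  refine Finset.sum_eq_zero fun w _ => ?_
  split_ifs with hw
  · have hq : 0 < margProd p w := h ▸ hw
    rw [lam2_eq_div_margProd hq, ← h, div_self hw.ne', Real.log_one, mul_zero]
  · rfl

end MarginalProduct

/-- Exponential bound for the probability that the product of likelihood
ratios of `t` i.i.d. pairs with law `P_{Y Ỹ}` is at most `1`. -/
theorem exponent_for_nonpositive_llr
    (p : 𝒴 × 𝒴 → ℝ) (hp : IsPmf p) (hm : MargEq p)
    (hI : 0 < mutInf2 p) :
    ∃ E₀ > (0 : ℝ), ∀ t : ℕ, 1 ≤ t →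
      (∑ z : Fin t → 𝒴 × 𝒴, (∏ i, p (z i)) *
          (if (∏ i, lam2 p (z i).1 (z i).2) ≤ 1 then 1 else 0)) ≤
        Real.exp (-(t : ℝ) * E₀) := by
  have hne : p ≠ margProd p := fun h => hI.ne' (mutInf2_eq_zero_of_eq_margProd h)
  obtain ⟨E₀, hE₀, hρ⟩ := exists_pow_le_exp_neg_mul bhattacharyya_nonneg
    (bhattacharyya_lt_one hp (isPmf_margProd hp) hne)
  refine ⟨E₀, hE₀, fun t _ => ?_⟩
  calc _ ≤ ∑ z : Fin t → 𝒴 × 𝒴, ∏ i, Real.sqrt (p (z i) * margProd p (z i)) :=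
        Finset.sum_le_sum fun z _ => prod_mul_indicator_prod_lam2_le hp hm z
    _ = bhattacharyya p (margProd p) ^ t := 
        (Fintype.sum_pow (fun w => Real.sqrt (p w * margProd p w)) t).symm
    _ ≤ Real.exp (-(t : ℝ) * E₀) := hρ t

end
end

section
/- Let ((Y_i,Ỹ_i))_{i∈ℤ} be i.i.d. with common law P_{YỸ}. Suppose E₊ > 0 is a constant such that for every integer m ≥ 1 and i.i.d. pairs ((Y′_i,Ȳ_i))_{i=1}^m with law P_Y ⊗ P_Y one has P[ ∏_{i=1}^m λ(Y′_i,Ȳ_i) > 1 ] ≤ exp(−m·E₊). Then for all integers k ≥ 1 and t ≥ 1: P[ ∏_{i=1}^t λ(Y_{k+i}, Ỹ_i) > 1 ] ≤ 2·exp( −(t−1)·E₊/2 ). -/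
open Filter Real

section

variable {𝒴 : Type*} [Fintype 𝒴] [Nonempty 𝒴]

open Finset

/-! ### Auxiliary counting lemmas -/

private def cnt (k t : ℕ) : ℕ := ∑ i ∈ range t, (if (i/k + i%k) % 2 = 0 then 1 else 0)

private lemma cnt_flip {k : ℕ} (hk : 1 ≤ k) (x : ℕ) :
    (((x+k)/k + (x+k)%k) % 2 = 0) ↔ ¬ ((x/k + x%k) % 2 = 0) := by
  rw [Nat.add_div_right x hk, Nat.add_mod_right]
  omega

private lemma cnt_le_k {k : ℕ} : ∀ t, t ≤ k → cnt k t = (t+1)/2 := by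
  intro t
  induction t with
  | zero => intro; simp [cnt]
  | succ n ih =>
    intro h
    have hn : n < k := by omega
    rw [cnt, Finset.sum_range_succ, ← cnt, ih (by omega), Nat.div_eq_of_lt hn,
      Nat.mod_eq_of_lt hn]
    rcases Nat.even_or_odd n with he | ho
    · have : n % 2 = 0 := Nat.even_iff.mp he
      simp [this]; omega
    · have : n % 2 = 1 := Nat.odd_iff.mp ho
      simp [this]; omega

private lemma odds_count : ∀ s : ℕ, (∑ j ∈ range s, if (1 + j) % 2 = 0 then 1 else 0) = s / 2 := by
  intro s
  induction s with
  | zero => simp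
  | succ n ih =>
    rw [Finset.sum_range_succ, ih]
    rcases Nat.even_or_odd n with he | ho
    · have : n % 2 = 0 := Nat.even_iff.mp he
      have : (1 + n) % 2 = 1 := by omega
      simp [this]; omega
    · have : n % 2 = 1 := Nat.odd_iff.mp ho
      have : (1 + n) % 2 = 0 := by omega
      simp [this]; omega

private lemma cnt_block {k : ℕ} (hk : 1 ≤ k) (s : ℕ) :
    (∑ i ∈ Ico s (s + 2*k), if (i/k + i%k) % 2 = 0 then 1 else 0) = k := by
  have hsplit : Ico s (s + 2*k) = Ico s (s+k) ∪ Ico (s+k) (s + 2*k) := by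
    rw [Finset.Ico_union_Ico_eq_Ico (by omega) (by omega)]
  rw [hsplit, Finset.sum_union (by apply Finset.Ico_disjoint_Ico_consecutive)]
  have h2 : (∑ i ∈ Ico (s+k) (s + 2*k), if (i/k + i%k) % 2 = 0 then 1 else 0)
      = ∑ i ∈ Ico s (s+k), if ((i+k)/k + (i+k)%k) % 2 = 0 then 1 else 0 := by
    rw [Finset.sum_Ico_eq_sum_range, Finset.sum_Ico_eq_sum_range]
    have : s + 2*k - (s+k) = k := by omega
    rw [this]
    have : s + k - s = k := by omega
    rw [this]
    apply Finset.sum_congr rfl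
    intro j _
    have he : s + k + j = s + j + k := by omega
    rw [he]
  rw [h2, ← Finset.sum_add_distrib]
  have : ∀ i ∈ Ico s (s+k), ((if (i/k + i%k) % 2 = 0 then 1 else 0)
      + if ((i+k)/k + (i+k)%k) % 2 = 0 then 1 else 0) = 1 := by
    intro i _
    have := cnt_flip hk i
    split_ifs with h1 h2 h2 <;> simp_all
  rw [Finset.sum_congr rfl this]
  simp

private lemma cnt_bounds {k : ℕ} (hk : 1 ≤ k) :
    ∀ t, t ≤ 2 * cnt k t + 1 ∧ 2 * cnt k t ≤ t + 1 := by
  intro t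
  induction t using Nat.strong_induction_on with
  | _ t ih =>
    rcases le_or_gt t k with h1 | h1
    · rw [cnt_le_k t h1]; omega
    rcases lt_or_ge t (2*k) with h2 | h2
    · have hct : cnt k t = (k+1)/2 + (t-k)/2 := by
        rw [cnt, ← Finset.sum_range_add_sum_Ico _ (le_of_lt h1), ← cnt, cnt_le_k k le_rfl]
        congr 1
        rw [Finset.sum_Ico_eq_sum_range]
        rw [← odds_count (t-k)]
        apply Finset.sum_congr rfl
        intro j hj
        simp only [Finset.mem_range] at hj
        have hjk : j < k := by omega
        have hdiv : (k+j)/k = 1 :=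
          Nat.div_eq_of_lt_le (by omega) (by omega)
        have hmod : (k+j)%k = j := by
          rw [Nat.add_mod_left, Nat.mod_eq_of_lt hjk]
        rw [hdiv, hmod]
      omega
    · have hct : cnt k t = cnt k (t - 2*k) + k := by
        rw [cnt, ← Finset.sum_range_add_sum_Ico _ (show t - 2*k ≤ t by omega), ← cnt]
        congr 1
        have : t = (t - 2*k) + 2*k := by omega
        rw [show Ico (t-2*k) t = Ico (t-2*k) ((t-2*k) + 2*k) by rw [← this]]
        exact cnt_block hk (t - 2*k)
      have := ih (t - 2*k) (by omega)
      omega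

/-! ### Marginalization lemmas -/

private lemma sum_fun_prod_eq_one {γ β : Type*} [Fintype γ] [Fintype β] [DecidableEq γ]
    (p : β → ℝ) (hp1 : ∑ b, p b = 1) :
    ∑ v : γ → β, ∏ i, p (v i) = 1 := by
  classical
  rw [← Fintype.piFinset_univ,
    ← Finset.prod_univ_sum (fun _ : γ => (univ : Finset β)) (fun _ b => p b)]
  simp [hp1]

private lemma sumA {n : ℕ} {β κ : Type*} [Fintype β] [Fintype κ] [DecidableEq κ]
    (p : β → ℝ) (hp1 : ∑ b, p b = 1) (ι : κ → Fin n) (hι : Function.Injective ι)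
    (H : (κ → β) → ℝ) :
    ∑ z : Fin n → β, (∏ i, p (z i)) * H (z ∘ ι) = ∑ w : κ → β, (∏ j, p (w j)) * H w := by
  classical
  set P : Fin n → Prop := fun i => ∃ a, ι a = i with hP
  let g : κ → {x // P x} := fun a => ⟨ι a, ⟨a, rfl⟩⟩
  have hg : Function.Bijective g := by
    constructor
    · intro a b hab
      exact hι (by simpa [g] using hab)
    · rintro ⟨x, a, rfl⟩
      exact ⟨a, rfl⟩
  let G : κ ≃ {x // P x} := Equiv.ofBijective g hg
  let e := Equiv.piEquivPiSubtypeProd P (fun _ => β)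
  rw [← Equiv.sum_comp e.symm (fun z => (∏ i, p (z i)) * H (z ∘ ι)), Fintype.sum_prod_type]
  have key : ∀ (u : {x // P x} → β) (v : {x // ¬ P x} → β),
      (∏ i, p (e.symm (u, v) i)) * H ((e.symm (u, v)) ∘ ι)
      = ((∏ i : {x // P x}, p (u i)) * H (u ∘ g))
        * (∏ i : {x // ¬ P x}, p (v i)) := by
    intro u v
    have h1 : ∀ i : {x // P x}, e.symm (u, v) (i : Fin n) = u i := by
      intro i; simp [e, Equiv.piEquivPiSubtypeProd, i.2]
    have h2 : ∀ i : {x // ¬ P x}, e.symm (u, v) (i : Fin n) = v i := by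
      intro i; simp [e, Equiv.piEquivPiSubtypeProd, i.2]
    have h3 : (∏ i, p (e.symm (u, v) i)) =
        (∏ i : {x // P x}, p (u i)) * (∏ i : {x // ¬ P x}, p (v i)) := by
      rw [← Fintype.prod_subtype_mul_prod_subtype P (fun i => p (e.symm (u,v) i))]
      congr 1
      · exact Finset.prod_congr rfl (fun i _ => by rw [h1])
      · exact Finset.prod_congr rfl (fun i _ => by rw [h2])
    have h4 : (e.symm (u, v)) ∘ ι = u ∘ g := by
      funext a; exact h1 (g a)
    rw [h3, h4]; ring
  simp only [key]
  rw [← Finset.sum_mul_sum]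
  rw [sum_fun_prod_eq_one (γ := {x // ¬ P x}) p hp1, mul_one]
  rw [← Equiv.sum_comp (Equiv.arrowCongr G (Equiv.refl β))
    (fun u : {x // P x} → β => (∏ i : {x // P x}, p (u i)) * H (u ∘ g))]
  apply Finset.sum_congr rfl
  intro w _
  have h5 : (Equiv.arrowCongr G (Equiv.refl β)) w = w ∘ G.symm := by
    funext i; simp [Equiv.arrowCongr]
  rw [h5]
  have h6 : (w ∘ G.symm) ∘ g = w := by
    funext a
    have : G.symm (g a) = a := G.symm_apply_apply a
    simp [Function.comp, this]
  rw [h6]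
  congr 1
  exact Equiv.prod_comp G.symm (fun a => p (w a))

private lemma sumB {κ α γ : Type*} [Fintype κ] [Fintype α] [Fintype γ]
    [DecidableEq κ] [DecidableEq γ]
    (q : α → ℝ) (c : κ → α → γ) (H : (κ → γ) → ℝ) :
    ∑ w : κ → α, (∏ j, q (w j)) * H (fun j => c j (w j))
    = ∑ v : κ → γ, (∏ j, ∑ x ∈ Finset.univ.filter (fun x => c j x = v j), q x) * H v := by
  classical
  have rhs : ∀ v : κ → γ, (∏ j, ∑ x ∈ Finset.univ.filter (fun x => c j x = v j), q x)
      = ∑ w ∈ Fintype.piFinset (fun j => Finset.univ.filter (fun x => c j x = v j)),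
          ∏ j, q (w j) :=
    fun v => Finset.prod_univ_sum _ _
  simp only [rhs, Finset.sum_mul]
  rw [← Finset.sum_fiberwise (univ : Finset (κ → α)) (fun w => fun j => c j (w j))
    (fun w => (∏ j, q (w j)) * H (fun j => c j (w j)))]
  apply Finset.sum_congr rfl
  intro v _
  have hset : Fintype.piFinset (fun j => Finset.univ.filter (fun x => c j x = v j))
      = (univ : Finset (κ → α)).filter (fun w => (fun j => c j (w j)) = v) := by
    ext w
    simp [Fintype.mem_piFinset, funext_iff]
  rw [hset]
  apply Finset.sum_congr rfl
  intro w hw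
  simp only [Finset.mem_filter] at hw
  rw [hw.2]

private lemma filter_fst_sum (p : 𝒴 × 𝒴 → ℝ) (y : 𝒴) [DecidableEq 𝒴] :
    ∑ x ∈ Finset.univ.filter (fun x : 𝒴 × 𝒴 => x.1 = y), p x = margFst p y := by
  rw [Finset.sum_filter, Fintype.sum_prod_type]
  simp only [margFst]
  rw [Finset.sum_comm]
  apply Finset.sum_congr rfl
  intro b _
  rw [Finset.sum_ite_eq' univ y (fun a => p (a, b))]
  simp

private lemma filter_snd_sum (p : 𝒴 × 𝒴 → ℝ) (hm : MargEq p) (y : 𝒴) [DecidableEq 𝒴] :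
    ∑ x ∈ Finset.univ.filter (fun x : 𝒴 × 𝒴 => x.2 = y), p x = margFst p y := by
  rw [Finset.sum_filter, Fintype.sum_prod_type]
  have : ∀ a : 𝒴, (∑ b, if b = y then p (a, b) else 0) = p (a, y) := by
    intro a
    rw [Finset.sum_ite_eq' univ y (fun b => p (a, b))]; simp
  simp only [this]
  rw [margFst, hm]

/-- Per-class bound. -/
private lemma class_bound (p : 𝒴 × 𝒴 → ℝ) (hp : IsPmf p) (hm : MargEq p)
    (Eplus : ℝ)
    (hbound : ∀ m : ℕ, 1 ≤ m →
      (∑ w : Fin m → 𝒴 × 𝒴, (∏ i, margFst p (w i).1 * margFst p (w i).2) *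
          (if 1 < (∏ i, lam2 p (w i).1 (w i).2) then 1 else 0)) ≤
        Real.exp (-(m : ℝ) * Eplus))
    (k t : ℕ) (P : Fin t → Prop) [DecidablePred P]
    (hflip : ∀ i j : Fin t, P i → P j → k + (i : ℕ) ≠ (j : ℕ)) :
    (∑ z : Fin (k + t) → 𝒴 × 𝒴, (∏ i, p (z i)) *
        (if 1 < (∏ i : {i : Fin t // P i},
            lam2 p (z (Fin.natAdd k i.1)).1 (z (Fin.castLE (Nat.le_add_left t k) i.1)).2)
          then 1 else 0)) ≤
      Real.exp (-(Fintype.card {i : Fin t // P i} : ℝ) * Eplus) := by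
  classical
  set κ := {i : Fin t // P i}
  set m := Fintype.card κ with hm0
  set ι : κ ⊕ κ → Fin (k + t) :=
    Sum.elim (fun i => Fin.natAdd k i.1) (fun i => Fin.castLE (Nat.le_add_left t k) i.1) with hι0
  have hι : Function.Injective ι := by
    rintro (i | i) (j | j) h <;>
      simp only [hι0, Sum.elim_inl, Sum.elim_inr] at h
    · have : (i.1 : ℕ) = j.1 := by
        have := congrArg Fin.val h
        simpa [Fin.natAdd] using this
      exact congrArg _ (Subtype.ext (Fin.val_injective this))
    · exfalso
      have hv : k + (i.1 : ℕ) = (j.1 : ℕ) := by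
        have := congrArg Fin.val h
        simpa [Fin.natAdd, Fin.castLE] using this
      exact hflip i.1 j.1 i.2 j.2 hv
    · exfalso
      have hv : k + (j.1 : ℕ) = (i.1 : ℕ) := by
        have := congrArg Fin.val h
        simpa [Fin.natAdd, Fin.castLE] using this.symm
      exact hflip j.1 i.1 j.2 i.2 hv
    · have : (i.1 : ℕ) = j.1 := by
        have := congrArg Fin.val h
        simpa [Fin.castLE] using this
      exact congrArg _ (Subtype.ext (Fin.val_injective this))
  set H : (κ ⊕ κ → 𝒴 × 𝒴) → ℝ :=
    fun u => if 1 < (∏ i : κ, lam2 p (u (Sum.inl i)).1 (u (Sum.inr i)).2) then 1 else 0 with hH0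
  have step1 : (∑ z : Fin (k + t) → 𝒴 × 𝒴, (∏ i, p (z i)) *
        (if 1 < (∏ i : κ,
            lam2 p (z (Fin.natAdd k i.1)).1 (z (Fin.castLE (Nat.le_add_left t k) i.1)).2)
          then 1 else 0))
      = ∑ w : κ ⊕ κ → 𝒴 × 𝒴, (∏ j, p (w j)) * H w := by
    rw [← sumA p hp.2 ι hι H]
    rfl
  rw [step1]
  set c : κ ⊕ κ → 𝒴 × 𝒴 → 𝒴 := Sum.elim (fun _ => Prod.fst) (fun _ => Prod.snd) with hc0
  set H' : (κ ⊕ κ → 𝒴) → ℝ :=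
    fun v => if 1 < (∏ i : κ, lam2 p (v (Sum.inl i)) (v (Sum.inr i))) then 1 else 0 with hH'0
  have step2 : ∑ w : κ ⊕ κ → 𝒴 × 𝒴, (∏ j, p (w j)) * H w
      = ∑ v : κ ⊕ κ → 𝒴, (∏ j, margFst p (v j)) * H' v := by
    have : ∀ w : κ ⊕ κ → 𝒴 × 𝒴, H w = H' (fun j => c j (w j)) := fun w => rfl
    simp only [this]
    rw [sumB p c H']
    apply Finset.sum_congr rfl
    intro v _
    congr 1
    apply Finset.prod_congr rfl
    rintro (j | j) _
    · exact filter_fst_sum p (v (Sum.inl j))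
    · exact filter_snd_sum p hm (v (Sum.inr j))
  rw [step2]
  set f : κ ≃ Fin m := Fintype.equivFin κ with hf0
  set E : (Fin m → 𝒴 × 𝒴) ≃ (κ ⊕ κ → 𝒴) :=
    { toFun := fun w => Sum.elim (fun a => (w (f a)).1) (fun a => (w (f a)).2)
      invFun := fun v => fun i => (v (Sum.inl (f.symm i)), v (Sum.inr (f.symm i)))
      left_inv := by intro w; funext i; simp
      right_inv := by intro v; funext j; cases j <;> simp } with hE0
  have step3 : ∑ v : κ ⊕ κ → 𝒴, (∏ j, margFst p (v j)) * H' v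
      = ∑ w : Fin m → 𝒴 × 𝒴, (∏ i, margFst p (w i).1 * margFst p (w i).2) *
          (if 1 < (∏ i, lam2 p (w i).1 (w i).2) then 1 else 0) := by
    rw [← Equiv.sum_comp E (fun v => (∏ j, margFst p (v j)) * H' v)]
    apply Finset.sum_congr rfl
    intro w _
    congr 1
    · rw [Fintype.prod_sum_type]
      have e1 : (∏ a : κ, margFst p ((E w) (Sum.inl a))) = ∏ a : κ, margFst p (w (f a)).1 := rfl
      have e2 : (∏ a : κ, margFst p ((E w) (Sum.inr a))) = ∏ a : κ, margFst p (w (f a)).2 := rfl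
      rw [e1, e2, Equiv.prod_comp f (fun i => margFst p (w i).1),
        Equiv.prod_comp f (fun i => margFst p (w i).2), ← Finset.prod_mul_distrib]
    · simp only [hH'0]
      congr 1
      have : (∏ i : κ, lam2 p ((E w) (Sum.inl i)) ((E w) (Sum.inr i)))
          = ∏ i : κ, lam2 p (w (f i)).1 (w (f i)).2 := rfl
      rw [this, Equiv.prod_comp f (fun i => lam2 p (w i).1 (w i).2)]
  rw [step3]
  rcases Nat.eq_zero_or_pos m with hm1 | hm1
  · haveI : IsEmpty (Fin m) := by rw [hm1]; infer_instance
    have hz : ∀ w : Fin m → 𝒴 × 𝒴,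
        (if 1 < (∏ i, lam2 p (w i).1 (w i).2) then (1:ℝ) else 0) = 0 := by
      intro w
      have h1 : (∏ i : Fin m, lam2 p (w i).1 (w i).2) = 1 := Finset.prod_of_isEmpty _
      rw [h1]
      simp
    simp only [hz, mul_zero, Finset.sum_const_zero]
    positivity
  · exact hbound m hm1

/-- Bound on the probability that the shifted product of likelihood ratios
of (dependent) pairs from an i.i.d. pair sequence exceeds `1`. -/
theorem shifted_llr_bound
    (p : 𝒴 × 𝒴 → ℝ) (hp : IsPmf p) (hm : MargEq p)
    (Eplus : ℝ) (hE : 0 < Eplus)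
    (hbound : ∀ m : ℕ, 1 ≤ m →
      (∑ w : Fin m → 𝒴 × 𝒴, (∏ i, margFst p (w i).1 * margFst p (w i).2) *
          (if 1 < (∏ i, lam2 p (w i).1 (w i).2) then 1 else 0)) ≤
        Real.exp (-(m : ℝ) * Eplus))
    (k t : ℕ) (hk : 1 ≤ k) (ht : 1 ≤ t) :
    (∑ z : Fin (k + t) → 𝒴 × 𝒴, (∏ i, p (z i)) *
        (if 1 < (∏ i : Fin t,
            lam2 p (z (Fin.natAdd k i)).1 (z (Fin.castLE (Nat.le_add_left t k) i)).2)
          then 1 else 0)) ≤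
      2 * Real.exp (-((t : ℝ) - 1) * Eplus / 2) := by
  classical
  have hlam : ∀ y z : 𝒴, 0 ≤ lam2 p y z := by
    intro y z
    rw [lam2]
    split_ifs with h
    · exact div_nonneg (hp.1 _) h.le
    · exact le_rfl
  set P : Fin t → Prop := fun i => ((i:ℕ)/k + (i:ℕ)%k) % 2 = 0 with hP
  have hflipP : ∀ i j : Fin t, P i → P j → k + (i : ℕ) ≠ (j : ℕ) := by
    intro i j hi hj hij
    have hx : ((i:ℕ) + k) = (j:ℕ) := by omega
    have := (cnt_flip hk (i:ℕ)).mp (by rw [hx]; exact hj)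
    exact this hi
  have hflipQ : ∀ i j : Fin t, ¬ P i → ¬ P j → k + (i : ℕ) ≠ (j : ℕ) := by
    intro i j hi hj hij
    have hx : ((i:ℕ) + k) = (j:ℕ) := by omega
    have h2 := (cnt_flip hk (i:ℕ)).mpr hi
    rw [hx] at h2
    exact hj h2
  set a := Fintype.card {i : Fin t // P i} with ha0
  set b := Fintype.card {i : Fin t // ¬ P i} with hb0
  have hacnt : a = cnt k t := by
    rw [ha0, Fintype.card_subtype, Finset.card_filter]
    rw [cnt, ← Fin.sum_univ_eq_sum_range (fun x : ℕ => if (x/k + x%k) % 2 = 0 then 1 else 0) t]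
  have habt : a + b = t := by
    rw [ha0, hb0]
    rw [Fintype.card_subtype_compl]
    have hle : Fintype.card {i : Fin t // P i} ≤ Fintype.card (Fin t) :=
      Fintype.card_subtype_le _
    simp only [Fintype.card_fin] at *
    omega
  have hbnds := cnt_bounds hk t
  have ha1 : (t : ℝ) - 1 ≤ 2 * (a : ℝ) := by
    have : t ≤ 2 * a + 1 := by rw [hacnt]; exact hbnds.1
    have := (Nat.cast_le (α := ℝ)).mpr this
    push_cast at this ⊢
    linarith
  have hb1 : (t : ℝ) - 1 ≤ 2 * (b : ℝ) := by
    have h2 : 2 * a ≤ t + 1 := by rw [hacnt]; exact hbnds.2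
    have h3 : 2 * b + 2 * a = 2 * t := by omega
    have : t - 1 ≤ 2 * b := by omega
    have h4 := (Nat.cast_le (α := ℝ)).mpr h2
    have h5 : (a : ℝ) + b = t := by exact_mod_cast congrArg (Nat.cast (R := ℝ)) habt
    push_cast at h4 ⊢
    linarith
  -- pointwise indicator split
  have split : ∀ z : Fin (k + t) → 𝒴 × 𝒴,
      (if 1 < (∏ i : Fin t,
          lam2 p (z (Fin.natAdd k i)).1 (z (Fin.castLE (Nat.le_add_left t k) i)).2)
        then (1:ℝ) else 0)
      ≤ (if 1 < (∏ i : {i : Fin t // P i},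
            lam2 p (z (Fin.natAdd k i.1)).1 (z (Fin.castLE (Nat.le_add_left t k) i.1)).2)
          then (1:ℝ) else 0)
        + (if 1 < (∏ i : {i : Fin t // ¬ P i},
            lam2 p (z (Fin.natAdd k i.1)).1 (z (Fin.castLE (Nat.le_add_left t k) i.1)).2)
          then (1:ℝ) else 0) := by
    intro z
    set g : Fin t → ℝ :=
      fun i => lam2 p (z (Fin.natAdd k i)).1 (z (Fin.castLE (Nat.le_add_left t k) i)).2 with hg
    have hXY : (∏ i : Fin t, g i)
        = (∏ i : {i : Fin t // P i}, g i.1) * (∏ i : {i : Fin t // ¬ P i}, g i.1) :=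
      (Fintype.prod_subtype_mul_prod_subtype P g).symm
    have hX0 : 0 ≤ ∏ i : {i : Fin t // P i}, g i.1 :=
      Finset.prod_nonneg (fun i _ => hlam _ _)
    have hY0 : 0 ≤ ∏ i : {i : Fin t // ¬ P i}, g i.1 :=
      Finset.prod_nonneg (fun i _ => hlam _ _)
    rw [show (∏ i : Fin t, g i) = _ from hXY]
    split_ifs with h1 h2 h3 h2 h3 h3 <;> try norm_num
    · nlinarith
  have hsplit_sum : (∑ z : Fin (k + t) → 𝒴 × 𝒴, (∏ i, p (z i)) *
        (if 1 < (∏ i : Fin t,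
            lam2 p (z (Fin.natAdd k i)).1 (z (Fin.castLE (Nat.le_add_left t k) i)).2)
          then 1 else 0))
      ≤ (∑ z : Fin (k + t) → 𝒴 × 𝒴, (∏ i, p (z i)) *
          (if 1 < (∏ i : {i : Fin t // P i},
              lam2 p (z (Fin.natAdd k i.1)).1 (z (Fin.castLE (Nat.le_add_left t k) i.1)).2)
            then 1 else 0))
        + (∑ z : Fin (k + t) → 𝒴 × 𝒴, (∏ i, p (z i)) *
          (if 1 < (∏ i : {i : Fin t // ¬ P i},
              lam2 p (z (Fin.natAdd k i.1)).1 (z (Fin.castLE (Nat.le_add_left t k) i.1)).2)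
            then 1 else 0)) := by
    rw [← Finset.sum_add_distrib]
    apply Finset.sum_le_sum
    intro z _
    rw [← mul_add]
    apply mul_le_mul_of_nonneg_left (split z)
    exact Finset.prod_nonneg (fun i _ => hp.1 _)
  have hA := class_bound p hp hm Eplus hbound k t P hflipP
  have hB := class_bound p hp hm Eplus hbound k t (fun i => ¬ P i) hflipQ
  have hexpA : Real.exp (-(a : ℝ) * Eplus) ≤ Real.exp (-((t : ℝ) - 1) * Eplus / 2) := by
    apply Real.exp_le_exp.mpr
    nlinarith [hE.le]
  have hexpB : Real.exp (-(b : ℝ) * Eplus) ≤ Real.exp (-((t : ℝ) - 1) * Eplus / 2) := by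
    apply Real.exp_le_exp.mpr
    nlinarith [hE.le]
  calc (∑ z : Fin (k + t) → 𝒴 × 𝒴, (∏ i, p (z i)) *
        (if 1 < (∏ i : Fin t,
            lam2 p (z (Fin.natAdd k i)).1 (z (Fin.castLE (Nat.le_add_left t k) i)).2)
          then 1 else 0))
      ≤ _ + _ := hsplit_sum
    _ ≤ Real.exp (-(a : ℝ) * Eplus) + Real.exp (-(b : ℝ) * Eplus) := add_le_add hA hB
    _ ≤ Real.exp (-((t : ℝ) - 1) * Eplus / 2) + Real.exp (-((t : ℝ) - 1) * Eplus / 2) :=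
        add_le_add hexpA hexpB
    _ = 2 * Real.exp (-((t : ℝ) - 1) * Eplus / 2) := by ring

end
end

section
/- Let P and Q be probability measures on a measurable space (Ω,𝔉) with P absolutely continuous with respect to Q, and let g := dP/dQ be a Radon–Nikodym derivative. Let Z : Ω → {0,1} be measurable and let η > 0. Then P({Z = 1}) + η·Q({Z = 0}) ≥ 1 − P({ω ∈ Ω : g(ω) > η}). -/
open MeasureTheory
open scoped ENNReal

/-- Strong converse bound for binary hypothesis testing: for any test `Z`
between `H₀ : P` and `H₁ : Q`, and any `η > 0`,
`P[Z = 1] + η Q[Z = 0] ≥ 1 - P[dP/dQ > η]`. -/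
theorem strong_converse_binary_hypothesis_testing
    {Ω : Type*} [MeasurableSpace Ω] (P Q : Measure Ω)
    [IsProbabilityMeasure P] [IsProbabilityMeasure Q]
    (hPQ : P ≪ Q)
    (g : Ω → ℝ≥0∞) (hgmeas : Measurable g) (hg : P = Q.withDensity g)
    (Z : Ω → Bool) (hZ : Measurable Z)
    (η : ℝ) (hη : 0 < η) :
    1 - (P {ω | ENNReal.ofReal η < g ω}).toReal ≤
      (P {ω | Z ω = true}).toReal + η * (Q {ω | Z ω = false}).toReal := by
  set s := {ω | Z ω = true} with hs
  set t := {ω | ENNReal.ofReal η < g ω} with ht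
  have hsm : MeasurableSet s := hZ (measurableSet_singleton true)
  have htm : MeasurableSet t := measurableSet_lt measurable_const hgmeas
  have hcompl : {ω | Z ω = false} = sᶜ := by
    ext ω; simp only [Set.mem_setOf_eq, Set.mem_compl_iff, hs, Bool.not_eq_true]
  have key : P (sᶜ ∩ tᶜ) ≤ ENNReal.ofReal η * Q sᶜ := by
    rw [hg, withDensity_apply _ (hsm.compl.inter htm.compl)]
    calc ∫⁻ ω in sᶜ ∩ tᶜ, g ω ∂Q ≤ ∫⁻ _ in sᶜ ∩ tᶜ, ENNReal.ofReal η ∂Q := by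
          refine setLIntegral_mono' (hsm.compl.inter htm.compl) fun ω hω => ?_
          exact not_lt.mp hω.2
      _ = ENNReal.ofReal η * Q (sᶜ ∩ tᶜ) := by
          rw [setLIntegral_const, mul_comm]
      _ ≤ ENNReal.ofReal η * Q sᶜ := by
          gcongr; exact Set.inter_subset_left
  have hunion : (1 : ℝ≥0∞) ≤ P s + P t + ENNReal.ofReal η * Q sᶜ := by
    have hsub : (Set.univ : Set Ω) ⊆ s ∪ t ∪ (sᶜ ∩ tᶜ) := by
      intro ω _
      by_cases h1 : ω ∈ s
      · exact Or.inl (Or.inl h1)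
      by_cases h2 : ω ∈ t
      · exact Or.inl (Or.inr h2)
      · exact Or.inr ⟨h1, h2⟩
    have h1 : P Set.univ ≤ P s + P t + P (sᶜ ∩ tᶜ) :=
      calc P Set.univ ≤ P (s ∪ t ∪ (sᶜ ∩ tᶜ)) := measure_mono hsub
        _ ≤ P (s ∪ t) + P (sᶜ ∩ tᶜ) := measure_union_le _ _
        _ ≤ P s + P t + P (sᶜ ∩ tᶜ) := by gcongr; exact measure_union_le _ _
    rw [measure_univ] at h1
    exact h1.trans (by gcongr)
  have hfin : P s + P t + ENNReal.ofReal η * Q sᶜ ≠ ∞ := by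
    refine ENNReal.add_ne_top.mpr ⟨ENNReal.add_ne_top.mpr ⟨measure_ne_top _ _, measure_ne_top _ _⟩, ?_⟩
    exact ENNReal.mul_ne_top ENNReal.ofReal_ne_top (measure_ne_top _ _)
  have hreal := ENNReal.toReal_mono hfin hunion
  rw [ENNReal.toReal_add (ENNReal.add_ne_top.mpr ⟨measure_ne_top _ _, measure_ne_top _ _⟩)
      (ENNReal.mul_ne_top ENNReal.ofReal_ne_top (measure_ne_top _ _)),
    ENNReal.toReal_add (measure_ne_top _ _) (measure_ne_top _ _),
    ENNReal.toReal_mul, ENNReal.toReal_ofReal hη.le, ENNReal.toReal_one] at hreal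
  rw [hcompl]
  linarith
end
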